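/- arXiv:2210.04850 — 2 statements merged into one kernel-verified Lean document; each statement's English description precedes it below -/
import Mathlib

section
/- Two three times differentiable distribution functions F, G with strictly positive densities satisfy F =₃ G (i.e. both F ≤₃ G and G ≤₃ F) if and only if the function φ = R_{FG} = G^{-1}∘F satisfies the differential inequality 0 ≤ φ'''(t) ≤ 3(φ''(t))²/φ'(t) for all t in the interior of the support of F. -/
/-- A three times differentiable distribution function with interval support
and strictly positive density on the interior `D` of its support, together
with its inverse (= quantile function) `inv : (0,1) → D`. -/
structure CDF where
  /-- the distribution function -/
  F : ℝ → ℝ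
  /-- the interior of the support, an open interval -/
  D : Set ℝ
  /-- the inverse (quantile) function -/
  inv : ℝ → ℝ
  isOpen : IsOpen D
  ordConn : D.OrdConnected
  nonempty : D.Nonempty
  smooth : ContDiffOn ℝ 3 F D
  smooth_inv : ContDiffOn ℝ 3 inv (Set.Ioo 0 1)
  density_pos : ∀ x ∈ D, 0 < deriv F x
  mapsTo : Set.MapsTo F D (Set.Ioo 0 1)
  inv_mapsTo : Set.MapsTo inv (Set.Ioo 0 1) D
  left_inv : ∀ x ∈ D, inv (F x) = x
  right_inv : ∀ p ∈ Set.Ioo (0:ℝ) 1, F (inv p) = p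

/-- `R_{FG} = G⁻¹ ∘ F`. -/
def R (F G : CDF) : ℝ → ℝ := fun x => G.inv (F.F x)

/-- the kurtosis order `F ≤₃ G` : the third derivative of `R_{FG}` is
nonnegative on the interior of the support of `F`. -/
def le3 (F G : CDF) : Prop := ∀ t ∈ F.D, 0 ≤ deriv (deriv (deriv (R F G))) t

section aux

lemma hda1 {f : ℝ → ℝ} {s : Set ℝ} (hs : IsOpen s) (hf : ContDiffOn ℝ 3 f s) {x : ℝ}
    (hx : x ∈ s) : HasDerivAt f (deriv f x) x :=
  ((hf.differentiableOn (by norm_num)).differentiableAt (hs.mem_nhds hx)).hasDerivAt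

lemma hda2 {f : ℝ → ℝ} {s : Set ℝ} (hs : IsOpen s) (hf : ContDiffOn ℝ 3 f s) {x : ℝ}
    (hx : x ∈ s) : HasDerivAt (deriv f) (deriv (deriv f) x) x :=
  ((((hf.deriv_of_isOpen hs (show (2:WithTop ℕ∞) + 1 ≤ 3 by norm_num) : ContDiffOn ℝ 2 (deriv f) s)).differentiableOn (by norm_num)).differentiableAt
    (hs.mem_nhds hx)).hasDerivAt

lemma hda3 {f : ℝ → ℝ} {s : Set ℝ} (hs : IsOpen s) (hf : ContDiffOn ℝ 3 f s) {x : ℝ}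
    (hx : x ∈ s) : HasDerivAt (deriv (deriv f)) (deriv (deriv (deriv f)) x) x :=
  ((((hf.deriv_of_isOpen hs (show (2:WithTop ℕ∞) + 1 ≤ 3 by norm_num) : ContDiffOn ℝ 2 (deriv f) s).deriv_of_isOpen hs
    (show (1:WithTop ℕ∞) + 1 ≤ 2 by norm_num) : ContDiffOn ℝ 1 (deriv (deriv f)) s).differentiableOn
    (by norm_num)).differentiableAt (hs.mem_nhds hx)).hasDerivAt

lemma R_contDiffOn (F G : CDF) : ContDiffOn ℝ 3 (R F G) F.D :=
  G.smooth_inv.comp F.smooth F.mapsTo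

lemma R_mapsTo (F G : CDF) : Set.MapsTo (R F G) F.D G.D :=
  fun _ ht => G.inv_mapsTo (F.mapsTo ht)

lemma R_leftInv (F G : CDF) : ∀ t ∈ F.D, R G F (R F G t) = t := by
  intro t ht
  show F.inv (G.F (G.inv (F.F t))) = t
  rw [G.right_inv _ (F.mapsTo ht), F.left_inv t ht]

lemma deriv_R_pos (F G : CDF) {t : ℝ} (ht : t ∈ F.D) : 0 < deriv (R F G) t := by
  have hp : F.F t ∈ Set.Ioo (0:ℝ) 1 := F.mapsTo ht
  have hq : G.inv (F.F t) ∈ G.D := G.inv_mapsTo hp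
  have hinv : HasDerivAt G.inv (deriv G.inv (F.F t)) (F.F t) :=
    ((G.smooth_inv.differentiableOn (by norm_num)).differentiableAt
      (isOpen_Ioo.mem_nhds hp)).hasDerivAt
  have hF : HasDerivAt F.F (deriv F.F t) t := hda1 F.isOpen F.smooth ht
  have hGF : HasDerivAt G.F (deriv G.F (G.inv (F.F t))) (G.inv (F.F t)) :=
    hda1 G.isOpen G.smooth hq
  -- G.F ∘ G.inv = id near F.F t
  have hcomp : HasDerivAt (G.F ∘ G.inv) (deriv G.F (G.inv (F.F t)) * deriv G.inv (F.F t))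
      (F.F t) := hGF.comp _ hinv
  have hid : HasDerivAt (G.F ∘ G.inv) 1 (F.F t) := by
    have heq : G.F ∘ G.inv =ᶠ[nhds (F.F t)] id :=
      Filter.eventuallyEq_of_mem (isOpen_Ioo.mem_nhds hp) (fun y hy => G.right_inv y hy)
    exact (hasDerivAt_id (F.F t)).congr_of_eventuallyEq heq
  have h1 : deriv G.F (G.inv (F.F t)) * deriv G.inv (F.F t) = 1 := hcomp.unique hid
  have hGpos := G.density_pos _ hq
  have hinvpos : 0 < deriv G.inv (F.F t) := by
    rcases lt_trichotomy (deriv G.inv (F.F t)) 0 with h | h | h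
    · nlinarith
    · simp [h] at h1
    · exact h
  have hRd : HasDerivAt (R F G) (deriv G.inv (F.F t) * deriv F.F t) t := hinv.comp t hF
  rw [hRd.deriv]
  exact mul_pos hinvpos (F.density_pos t ht)

end aux

lemma key (F G : CDF) {t : ℝ} (ht : t ∈ F.D) :
    deriv (deriv (deriv (R G F))) (R F G t) * (deriv (R F G) t)^5 =
      3 * (deriv (deriv (R F G)) t)^2
        - deriv (R F G) t * deriv (deriv (deriv (R F G))) t := by
  set φ := R F G with hφdef
  set ψ := R G F with hψdef
  have hφ := R_contDiffOn F G
  have hψ := R_contDiffOn G F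
  have hmap := R_mapsTo F G
  have hsD : φ t ∈ G.D := hmap ht
  -- first identity on F.D
  have I1 : ∀ x ∈ F.D, deriv ψ (φ x) * deriv φ x = 1 := by
    intro x hx
    have h1 : HasDerivAt (ψ ∘ φ) (deriv ψ (φ x) * deriv φ x) x :=
      (hda1 G.isOpen hψ (hmap hx)).comp x (hda1 F.isOpen hφ hx)
    have heq : ψ ∘ φ =ᶠ[nhds x] id :=
      Filter.eventuallyEq_of_mem (F.isOpen.mem_nhds hx) (fun y hy => R_leftInv F G y hy)
    exact h1.unique ((hasDerivAt_id x).congr_of_eventuallyEq heq)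
  -- second identity on F.D
  have I2 : ∀ x ∈ F.D,
      deriv (deriv ψ) (φ x) * deriv φ x * deriv φ x
        + deriv ψ (φ x) * deriv (deriv φ) x = 0 := by
    intro x hx
    have ha : HasDerivAt (fun y => deriv ψ (φ y)) (deriv (deriv ψ) (φ x) * deriv φ x) x :=
      (hda2 G.isOpen hψ (hmap hx)).comp x (hda1 F.isOpen hφ hx)
    have hb : HasDerivAt (fun y => deriv ψ (φ y) * deriv φ y)
        (deriv (deriv ψ) (φ x) * deriv φ x * deriv φ x
          + deriv ψ (φ x) * deriv (deriv φ) x) x :=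
      ha.mul (hda2 F.isOpen hφ hx)
    have heq : (fun y => deriv ψ (φ y) * deriv φ y) =ᶠ[nhds x] fun _ => (1:ℝ) :=
      Filter.eventuallyEq_of_mem (F.isOpen.mem_nhds hx) (fun y hy => I1 y hy)
    exact hb.unique ((hasDerivAt_const x 1).congr_of_eventuallyEq heq)
  -- third identity at t
  have ha : HasDerivAt (fun y => deriv (deriv ψ) (φ y))
      (deriv (deriv (deriv ψ)) (φ t) * deriv φ t) t :=
    (hda3 G.isOpen hψ hsD).comp t (hda1 F.isOpen hφ ht)
  have hb : HasDerivAt (fun y => deriv (deriv ψ) (φ y) * deriv φ y)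
      (deriv (deriv (deriv ψ)) (φ t) * deriv φ t * deriv φ t
        + deriv (deriv ψ) (φ t) * deriv (deriv φ) t) t := ha.mul (hda2 F.isOpen hφ ht)
  have hc : HasDerivAt (fun y => deriv (deriv ψ) (φ y) * deriv φ y * deriv φ y)
      ((deriv (deriv (deriv ψ)) (φ t) * deriv φ t * deriv φ t
        + deriv (deriv ψ) (φ t) * deriv (deriv φ) t) * deriv φ t
        + deriv (deriv ψ) (φ t) * deriv φ t * deriv (deriv φ) t) t :=
    hb.mul (hda2 F.isOpen hφ ht)
  have hd : HasDerivAt (fun y => deriv ψ (φ y)) (deriv (deriv ψ) (φ t) * deriv φ t) t :=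
    (hda2 G.isOpen hψ hsD).comp t (hda1 F.isOpen hφ ht)
  have he : HasDerivAt (fun y => deriv ψ (φ y) * deriv (deriv φ) y)
      (deriv (deriv ψ) (φ t) * deriv φ t * deriv (deriv φ) t
        + deriv ψ (φ t) * deriv (deriv (deriv φ)) t) t := hd.mul (hda3 F.isOpen hφ ht)
  have hf := hc.add he
  have heq : (fun y => deriv (deriv ψ) (φ y) * deriv φ y * deriv φ y
      + deriv ψ (φ y) * deriv (deriv φ) y) =ᶠ[nhds t] fun _ => (0:ℝ) :=
    Filter.eventuallyEq_of_mem (F.isOpen.mem_nhds ht) (fun y hy => I2 y hy)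
  have I3 := hf.unique ((hasDerivAt_const t 0).congr_of_eventuallyEq heq)
  have e1 := I1 t ht
  have e2 := I2 t ht
  have hapos := deriv_R_pos F G ht
  have hane : deriv φ t ≠ 0 := ne_of_gt hapos
  set a := deriv φ t
  set b := deriv (deriv φ) t
  set c := deriv (deriv (deriv φ)) t
  set A := deriv ψ (φ t)
  set B := deriv (deriv ψ) (φ t)
  set C := deriv (deriv (deriv ψ)) (φ t)
  -- e1 : A * a = 1 ; e2 : B*a*a + A*b = 0 ; I3 : ... = 0
  -- goal : C * a^5 = 3*b^2 - a*c
  have hA : A = 1/a := by field_simp; linarith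
  have hB : B = -b/a^3 := by
    rw [eq_div_iff (by positivity : (a:ℝ)^3 ≠ 0)]
    linear_combination a*e2 - b*e1
  rw [hA, hB] at I3
  field_simp at I3
  nlinarith [I3, sq_nonneg a, pow_pos hapos 5]

/-- `F =₃ G` (both `F ≤₃ G` and `G ≤₃ F`) holds iff
`φ = R_{FG} = G⁻¹∘F` satisfies `0 ≤ φ'''(t) ≤ 3(φ''(t))²/φ'(t)` on `D_F`. -/
theorem stmt6 (F G : CDF) :
    (le3 F G ∧ le3 G F) ↔
      ∀ t ∈ F.D,
        0 ≤ deriv (deriv (deriv (R F G))) t ∧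
        deriv (deriv (deriv (R F G))) t
          ≤ 3 * (deriv (deriv (R F G)) t)^2 / deriv (R F G) t := by
  constructor
  · rintro ⟨h1, h2⟩ t ht
    have hpos := deriv_R_pos F G ht
    refine ⟨h1 t ht, ?_⟩
    have hs : R F G t ∈ G.D := R_mapsTo F G ht
    have hk := key F G ht
    have h3 := h2 _ hs
    rw [le_div_iff₀ hpos]
    nlinarith [pow_pos hpos 5]
  · intro h
    constructor
    · intro t ht
      exact (h t ht).1
    · intro s hs
      have htD : R G F s ∈ F.D := R_mapsTo G F hs
      have hst : R F G (R G F s) = s := R_leftInv G F s hs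
      have hk := key F G htD
      rw [hst] at hk
      have hpos := deriv_R_pos F G htD
      obtain ⟨-, h2⟩ := h _ htD
      rw [le_div_iff₀ hpos] at h2
      nlinarith [pow_pos hpos 5]
end

section
/- Let ν ≠ 0 or τ ≠ 1 (so R ≠ id), τ > 1, and R(t) = sinh(τ·arsinh(t) − ν). Then h(t) = τ√(1+t²)·sinh(τ·arsinh(t)−ν) − t·cosh(τ·arsinh(t)−ν) is strictly increasing with lim_{t→−∞} h(t) = −∞ and lim_{t→+∞} h(t) = +∞, so h has a unique root t* and R''(t) < 0 for t < t*, R''(t) > 0 for t > t*. Hence R is concave on (−∞, t*] and convex on [t*, ∞). -/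
/-- The sinh-arsinh transformation `R t = sinh(τ·arsinh t − ν)`. -/
noncomputable def Rfun (ν τ : ℝ) (t : ℝ) : ℝ := Real.sinh (τ * Real.arsinh t - ν)

/-- `h t = τ√(1+t²)·sinh(τ·arsinh t − ν) − t·cosh(τ·arsinh t − ν)`, so that
`R''(t) = τ(1+t²)^{-3/2} h(t)`. -/
noncomputable def hfun (ν τ : ℝ) (s : ℝ) : ℝ :=
  τ * Real.sqrt (1 + s^2) * Real.sinh (τ * Real.arsinh s - ν)
    - s * Real.cosh (τ * Real.arsinh s - ν)

/-!
Since `h' = (τ² - 1) cosh (τ arsinh t - ν) ≥ τ² - 1 > 0`, `h` is strictly increasing and grows at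
least linearly in both directions, so it has exactly one root `t*`. As `R'' = τ (1 + t²)^(-3/2) h`,
`R''` has the sign of `t - t*`.
-/

open Real Filter

section GrowthOfDerivative

variable {f f' : ℝ → ℝ} {c : ℝ}

theorem monotone_sub_mul_of_le_hasDerivAt (hf : ∀ x, HasDerivAt f (f' x) x)
    (hc : ∀ x, c ≤ f' x) : Monotone fun x => f x - c * x :=
  monotone_of_hasDerivAt_nonneg (fun x => (hf x).sub ((hasDerivAt_id x).const_mul c))
    fun x => by simpa using hc x

theorem tendsto_atTop_atTop_of_le_hasDerivAt (hf : ∀ x, HasDerivAt f (f' x) x)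
    (hc₀ : 0 < c) (hc : ∀ x, c ≤ f' x) : Tendsto f atTop atTop := by
  have hlin : Tendsto (fun x => f 0 + c * x) atTop atTop :=
    tendsto_atTop_add_const_left _ _ (tendsto_id.const_mul_atTop hc₀)
  refine tendsto_atTop_mono' _ ?_ hlin
  filter_upwards [eventually_ge_atTop 0] with x hx
  have := monotone_sub_mul_of_le_hasDerivAt hf hc hx
  simp only [mul_zero, sub_zero] at this
  linarith

theorem tendsto_atBot_atBot_of_le_hasDerivAt (hf : ∀ x, HasDerivAt f (f' x) x)
    (hc₀ : 0 < c) (hc : ∀ x, c ≤ f' x) : Tendsto f atBot atBot := by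
  have hlin : Tendsto (fun x => f 0 + c * x) atBot atBot :=
    tendsto_atBot_add_const_left _ _ (tendsto_id.const_mul_atBot hc₀)
  refine tendsto_atBot_mono' _ ?_ hlin
  filter_upwards [eventually_le_atBot 0] with x hx
  have := monotone_sub_mul_of_le_hasDerivAt hf hc hx
  simp only [mul_zero, sub_zero] at this
  linarith

end GrowthOfDerivative

section SecondDerivative

variable {f : ℝ → ℝ} {a : ℝ}

theorem concaveOn_Iic_of_deriv_deriv_nonpos (hf : Differentiable ℝ f)
    (hf' : Differentiable ℝ (deriv f)) (h : ∀ x < a, deriv (deriv f) x ≤ 0) :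
    ConcaveOn ℝ (Set.Iic a) f :=
  concaveOn_of_deriv2_nonpos (convex_Iic a) hf.continuous.continuousOn hf.differentiableOn
    hf'.differentiableOn fun x hx => h x (by rwa [interior_Iic] at hx)

theorem convexOn_Ici_of_deriv_deriv_nonneg (hf : Differentiable ℝ f)
    (hf' : Differentiable ℝ (deriv f)) (h : ∀ x > a, 0 ≤ deriv (deriv f) x) :
    ConvexOn ℝ (Set.Ici a) f :=
  convexOn_of_deriv2_nonneg (convex_Ici a) hf.continuous.continuousOn hf.differentiableOn
    hf'.differentiableOn fun x hx => h x (by rwa [interior_Ici] at hx)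

end SecondDerivative

theorem hasDerivAt_sqrt_one_add_sq (t : ℝ) :
    HasDerivAt (fun x => √(1 + x ^ 2)) (t / √(1 + t ^ 2)) t := by
  refine (((hasDerivAt_pow 2 t).const_add 1).sqrt (by positivity)).congr_deriv ?_
  field_simp
  norm_num

section SinhArsinh

variable (ν τ : ℝ)

theorem hasDerivAt_mul_arsinh_sub (t : ℝ) :
    HasDerivAt (fun x => τ * arsinh x - ν) (τ / √(1 + t ^ 2)) t := by
  simpa [div_eq_mul_inv] using ((hasDerivAt_arsinh t).const_mul τ).sub_const ν

theorem hasDerivAt_Rfun (t : ℝ) :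
    HasDerivAt (Rfun ν τ) (τ * cosh (τ * arsinh t - ν) / √(1 + t ^ 2)) t :=
  (hasDerivAt_mul_arsinh_sub ν τ t).sinh.congr_deriv (by ring)

theorem deriv_Rfun :
    deriv (Rfun ν τ) = fun t => τ * cosh (τ * arsinh t - ν) / √(1 + t ^ 2) :=
  funext fun t => (hasDerivAt_Rfun ν τ t).deriv

theorem hasDerivAt_deriv_Rfun (t : ℝ) :
    HasDerivAt (deriv (Rfun ν τ)) (τ / √(1 + t ^ 2) ^ 3 * hfun ν τ t) t := by
  rw [deriv_Rfun]
  have hs : 0 < √(1 + t ^ 2) := by positivity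
  refine ((((hasDerivAt_mul_arsinh_sub ν τ t).cosh).const_mul τ).div
    (hasDerivAt_sqrt_one_add_sq t) hs.ne').congr_deriv ?_
  rw [hfun]
  field_simp

theorem deriv_deriv_Rfun (t : ℝ) :
    deriv (deriv (Rfun ν τ)) t = τ / √(1 + t ^ 2) ^ 3 * hfun ν τ t :=
  (hasDerivAt_deriv_Rfun ν τ t).deriv

theorem hasDerivAt_hfun (t : ℝ) :
    HasDerivAt (hfun ν τ) ((τ ^ 2 - 1) * cosh (τ * arsinh t - ν)) t := by
  refine ((((hasDerivAt_sqrt_one_add_sq t).const_mul τ).mul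
    (hasDerivAt_mul_arsinh_sub ν τ t).sinh).sub
    ((hasDerivAt_id' t).mul (hasDerivAt_mul_arsinh_sub ν τ t).cosh)).congr_deriv ?_
  field_simp
  ring

theorem sign_deriv_deriv_Rfun {ν τ : ℝ} (hτ : 0 < τ) (t : ℝ) :
    SignType.sign (deriv (deriv (Rfun ν τ)) t) = SignType.sign (hfun ν τ t) := by
  rw [deriv_deriv_Rfun, sign_mul, sign_pos (by positivity), one_mul]

end SinhArsinh

theorem stmt19_general (ν τ : ℝ) (hτ : 1 < τ) :
    StrictMono (hfun ν τ) ∧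
    Filter.Tendsto (hfun ν τ) Filter.atBot Filter.atBot ∧
    Filter.Tendsto (hfun ν τ) Filter.atTop Filter.atTop ∧
    ∃ tstar : ℝ, hfun ν τ tstar = 0 ∧
      (∀ t : ℝ, hfun ν τ t = 0 → t = tstar) ∧
      (∀ t : ℝ, t < tstar → deriv (deriv (Rfun ν τ)) t < 0) ∧
      (∀ t : ℝ, tstar < t → 0 < deriv (deriv (Rfun ν τ)) t) ∧
      ConcaveOn ℝ (Set.Iic tstar) (Rfun ν τ) ∧
      ConvexOn ℝ (Set.Ici tstar) (Rfun ν τ) := by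
  have hc : 0 < τ ^ 2 - 1 := by nlinarith
  have hderiv_ge : ∀ t, τ ^ 2 - 1 ≤ (τ ^ 2 - 1) * cosh (τ * arsinh t - ν) := fun t =>
    le_mul_of_one_le_right hc.le (one_le_cosh _)
  have hmono : StrictMono (hfun ν τ) :=
    strictMono_of_hasDerivAt_pos (hasDerivAt_hfun ν τ) fun t => hc.trans_le (hderiv_ge t)
  have hbot := tendsto_atBot_atBot_of_le_hasDerivAt (hasDerivAt_hfun ν τ) hc hderiv_ge
  have htop := tendsto_atTop_atTop_of_le_hasDerivAt (hasDerivAt_hfun ν τ) hc hderiv_ge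
  have hcont : Continuous (hfun ν τ) :=
    continuous_iff_continuousAt.2 fun t => (hasDerivAt_hfun ν τ t).continuousAt
  obtain ⟨tstar, hroot⟩ := hcont.surjective htop hbot 0
  have hsign := sign_deriv_deriv_Rfun (ν := ν) (by linarith : 0 < τ)
  have hneg : ∀ t, t < tstar → deriv (deriv (Rfun ν τ)) t < 0 := fun t ht => by
    rw [← sign_eq_neg_one_iff, hsign, sign_eq_neg_one_iff, ← hroot]
    exact hmono ht
  have hpos : ∀ t, tstar < t → 0 < deriv (deriv (Rfun ν τ)) t := fun t ht => by
    rw [← sign_eq_one_iff, hsign, sign_eq_one_iff, ← hroot]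
    exact hmono ht
  have hR : Differentiable ℝ (Rfun ν τ) := fun t => (hasDerivAt_Rfun ν τ t).differentiableAt
  have hR' : Differentiable ℝ (deriv (Rfun ν τ)) := fun t =>
    (hasDerivAt_deriv_Rfun ν τ t).differentiableAt
  exact ⟨hmono, hbot, htop, tstar, hroot, fun t ht => hmono.injective (ht.trans hroot.symm),
    hneg, hpos, concaveOn_Iic_of_deriv_deriv_nonpos hR hR' fun t ht => (hneg t ht).le,
    convexOn_Ici_of_deriv_deriv_nonneg hR hR' fun t ht => (hpos t ht).le⟩

/-- Let `ν ≠ 0` or `τ ≠ 1` (so `R ≠ id`), and `τ > 1`. Then `h`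
is strictly increasing with `h → −∞` at `−∞` and `h → +∞` at `+∞`, so `h` has
a unique root `t*`, and `R'' < 0` on `(−∞, t*)`, `R'' > 0` on `(t*, ∞)`;
hence `R` is concave on `(−∞, t*]` and convex on `[t*, ∞)`. -/
theorem stmt19 (ν τ : ℝ) (hne : ¬(ν = 0 ∧ τ = 1)) (hτ : 1 < τ) :
    StrictMono (hfun ν τ) ∧
    Filter.Tendsto (hfun ν τ) Filter.atBot Filter.atBot ∧
    Filter.Tendsto (hfun ν τ) Filter.atTop Filter.atTop ∧
    ∃ tstar : ℝ, hfun ν τ tstar = 0 ∧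
      (∀ t : ℝ, hfun ν τ t = 0 → t = tstar) ∧
      (∀ t : ℝ, t < tstar → deriv (deriv (Rfun ν τ)) t < 0) ∧
      (∀ t : ℝ, tstar < t → 0 < deriv (deriv (Rfun ν τ)) t) ∧
      ConcaveOn ℝ (Set.Iic tstar) (Rfun ν τ) ∧
      ConvexOn ℝ (Set.Ici tstar) (Rfun ν τ) :=
  stmt19_general ν τ hτ
end
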